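/- arXiv:1605.01182 — 8 statements merged into one kernel-verified Lean document; each statement's English description precedes it below -/
import Mathlib

section
/- For a probability distribution P on a finite set A and any probability distribution Q on A with Q(a) > 0 for all a, and any λ > 0, the sum ∑_{a∈A} P(a)/Q(a)^λ is at least (∑_{a∈A} P(a)^{1/(1+λ)})^{1+λ}, with equality when Q(a) is proportional to P(a)^{1/(1+λ)}. -/
/-!
Write `P = (P / Q^λ) · Q^λ` and apply Hölder's inequality with the exponent triple
`(1, 1/λ; 1/(1+λ))`: this gives `∑ P^{1/(1+λ)} ≤ (∑ P / Q^λ)^{1/(1+λ)} (∑ Q)^{λ/(1+λ)}`,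
and `∑ Q = 1`. For `Q = P^{1/(1+λ)} / S` with `S = ∑ P^{1/(1+λ)}`, every term `P / Q^λ` equals
`S^λ P^{1/(1+λ)}`, so the sum is `S^{1+λ}`.
-/

open Finset Real

section

variable {ι : Type*} {s : Finset ι} {p q : ι → ℝ} {l : ℝ}

theorem rpow_sum_rpow_one_div_one_add_le_sum_div_rpow_mul (hl : 0 < l) (hp : ∀ i ∈ s, 0 ≤ p i)
    (hq : ∀ i ∈ s, 0 < q i) :
    (∑ i ∈ s, p i ^ (1 / (1 + l))) ^ (1 + l) ≤ (∑ i ∈ s, p i / q i ^ l) * (∑ i ∈ s, q i) ^ l := by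
  have hexp : HolderTriple 1 (1 / l) (1 / (1 + l)) :=
    ⟨by simp only [one_div, inv_inv]; ring, one_pos, by positivity⟩
  have holder := Lr_rpow_le_Lp_mul_Lq_of_nonneg s hexp
    (f := fun i ↦ p i / q i ^ l) (g := fun i ↦ q i ^ l)
    (fun i hi ↦ div_nonneg (hp i hi) (rpow_nonneg (hq i hi).le l))
    (fun i hi ↦ rpow_nonneg (hq i hi).le l)
  have hfg : ∀ i ∈ s, p i / q i ^ l * q i ^ l = p i := fun i hi ↦
    div_mul_cancel₀ _ (rpow_pos_of_pos (hq i hi) l).ne'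
  have hg : ∀ i ∈ s, (q i ^ l) ^ (1 / l) = q i := fun i hi ↦ by
    rw [← rpow_mul (hq i hi).le, mul_one_div_cancel hl.ne', rpow_one]
  simp only [rpow_one, div_one] at holder
  rw [sum_congr rfl fun i hi ↦ by rw [hfg i hi], sum_congr rfl hg] at holder
  have hnum : 0 ≤ ∑ i ∈ s, p i / q i ^ l :=
    sum_nonneg fun i hi ↦ div_nonneg (hp i hi) (rpow_nonneg (hq i hi).le l)
  have hden : 0 ≤ ∑ i ∈ s, q i := sum_nonneg fun i hi ↦ (hq i hi).le
  calc (∑ i ∈ s, p i ^ (1 / (1 + l))) ^ (1 + l)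
      ≤ ((∑ i ∈ s, p i / q i ^ l) ^ (1 / (1 + l)) *
          (∑ i ∈ s, q i) ^ (1 / (1 + l) / (1 / l))) ^ (1 + l) :=
        rpow_le_rpow (sum_nonneg fun i hi ↦ rpow_nonneg (hp i hi) _) holder (by linarith)
    _ = (∑ i ∈ s, p i / q i ^ l) * (∑ i ∈ s, q i) ^ l := by
        have h1 : 1 / (1 + l) * (1 + l) = 1 := by field_simp
        have hl' : 1 / (1 + l) / (1 / l) * (1 + l) = l := by field_simp
        rw [mul_rpow (by positivity) (by positivity), ← rpow_mul hnum, ← rpow_mul hden, h1, hl',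
          rpow_one]

theorem div_rpow_div_eq_rpow_mul {x S : ℝ} (hx : 0 ≤ x) (hS : 0 < S) (hl : 1 + l ≠ 0) :
    x / (x ^ (1 / (1 + l)) / S) ^ l = S ^ l * x ^ (1 / (1 + l)) := by
  rcases hx.eq_or_lt with rfl | hx
  · rw [zero_div, zero_rpow (one_div_ne_zero hl), mul_zero]
  have hquot : x / x ^ (1 / (1 + l) * l) = x ^ (1 / (1 + l)) := by
    rw [div_eq_iff (rpow_pos_of_pos hx _).ne', ← rpow_add hx, ← mul_one_add,
      one_div_mul_cancel hl, rpow_one]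
  rw [div_rpow (rpow_nonneg hx.le _) hS.le, ← rpow_mul hx.le, div_div_eq_mul_div, mul_comm,
    mul_div_assoc, hquot]

theorem sum_div_rpow_normalized_rpow_eq (hl : 1 + l ≠ 0) (hp : ∀ i ∈ s, 0 ≤ p i)
    (hS : 0 < ∑ i ∈ s, p i ^ (1 / (1 + l))) :
    ∑ i ∈ s, p i / (p i ^ (1 / (1 + l)) / ∑ j ∈ s, p j ^ (1 / (1 + l))) ^ l =
      (∑ i ∈ s, p i ^ (1 / (1 + l))) ^ (1 + l) := by
  rw [sum_congr rfl fun i hi ↦ div_rpow_div_eq_rpow_mul (hp i hi) hS hl, ← mul_sum,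
    rpow_add hS, rpow_one, mul_comm]

end

theorem holder_opt_step_general
    (A : Type*) [Fintype A]
    (P Q : A → ℝ) (l : ℝ) (hl : 0 < l)
    (hP : ∀ a, 0 ≤ P a)
    (hQ : ∀ a, 0 < Q a) (hQsum : ∑ a, Q a = 1) :
    ((∑ a, (P a) ^ (1 / (1 + l))) ^ (1 + l) ≤ ∑ a, P a / (Q a) ^ l) ∧
    ((∀ a, Q a = (P a) ^ (1 / (1 + l)) / ∑ b, (P b) ^ (1 / (1 + l))) →
      ∑ a, P a / (Q a) ^ l = (∑ a, (P a) ^ (1 / (1 + l))) ^ (1 + l)) := by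
  refine ⟨?_, fun hQeq ↦ ?_⟩
  · simpa only [hQsum, one_rpow, mul_one] using
      rpow_sum_rpow_one_div_one_add_le_sum_div_rpow_mul (s := univ) hl (fun a _ ↦ hP a)
        (fun a _ ↦ hQ a)
  · set S := ∑ b, P b ^ (1 / (1 + l))
    have hS : S ≠ 0 := by
      intro hS0
      simp [hQeq, hS0] at hQsum
    simp only [hQeq]
    exact sum_div_rpow_normalized_rpow_eq (by linarith) (fun a _ ↦ hP a)
      ((sum_nonneg fun a _ ↦ rpow_nonneg (hP a) _).lt_of_ne' hS)

theorem holder_opt_step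
    (A : Type*) [Fintype A] [Nonempty A]
    (P Q : A → ℝ) (l : ℝ) (hl : 0 < l)
    (hP : ∀ a, 0 ≤ P a) (hPsum : ∑ a, P a = 1)
    (hQ : ∀ a, 0 < Q a) (hQsum : ∑ a, Q a = 1) :
    ((∑ a, (P a) ^ (1 / (1 + l))) ^ (1 + l) ≤ ∑ a, P a / (Q a) ^ l) ∧
    ((∀ a, Q a = (P a) ^ (1 / (1 + l)) / ∑ b, (P b) ^ (1 / (1 + l))) →
      ∑ a, P a / (Q a) ^ l = (∑ a, (P a) ^ (1 / (1 + l))) ^ (1 + l)) :=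
  holder_opt_step_general A P Q l hl hP hQ hQsum
end

section
/- Let A be a nonempty finite set, P a probability distribution on A, L' : A → ℝ a function with ∑_{a∈A} 2^{-L'(a)} ≤ 2^{γ} for some γ ≥ 0, and λ > 0. Then ∑_{a∈A} P(a)·2^{λ L'(a)} ≥ 2^{-λγ} · (∑_{a∈A} P(a)^{1/(1+λ)})^{1+λ}. -/
/-! Write `P a ^ (1/(1+λ)) = w a * (P a ^ (1/(1+λ)) / w a)` with the Kraft weights `w a = 2^(-L' a)`.
The weighted Hölder inequality with exponent `1 + λ` then bounds `(∑ P^(1/(1+λ)))^(1+λ)` by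
`(∑ w)^λ * ∑ P 2^(λ L')`, and the Kraft bound gives `(∑ w)^λ ≤ 2^(λγ)`. -/

open Finset Real

theorem rpow_sum_rpow_inv_le_sum_rpow_mul_sum_mul_rpow {ι : Type*} (s : Finset ι) {p : ℝ}
    (hp : 1 ≤ p) {P w : ι → ℝ} (hP : ∀ i, 0 ≤ P i) (hw : ∀ i, 0 < w i) :
    (∑ i ∈ s, P i ^ p⁻¹) ^ p ≤ (∑ i ∈ s, w i) ^ (p - 1) * ∑ i ∈ s, P i * w i ^ (1 - p) := by
  have hp0 : 0 < p := by linarith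
  set f : ι → ℝ := fun i => P i ^ p⁻¹ / w i
  have hwf (i : ι) : w i * f i = P i ^ p⁻¹ := mul_div_cancel₀ _ (hw i).ne'
  have hwfp (i : ι) : w i * f i ^ p = P i * w i ^ (1 - p) := by
    rw [div_rpow (rpow_nonneg (hP i) _) (hw i).le, ← rpow_mul (hP i), inv_mul_cancel₀ hp0.ne',
      rpow_one, rpow_sub (hw i), rpow_one]
    field_simp
  have holder := inner_le_weight_mul_Lp_of_nonneg s hp w f (fun i => (hw i).le)
    (fun i => div_nonneg (rpow_nonneg (hP i) _) (hw i).le)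
  simp only [hwf, hwfp] at holder
  have hW : 0 ≤ ∑ i ∈ s, w i := sum_nonneg fun i _ => (hw i).le
  have hS : 0 ≤ ∑ i ∈ s, P i * w i ^ (1 - p) :=
    sum_nonneg fun i _ => mul_nonneg (hP i) (rpow_nonneg (hw i).le _)
  calc (∑ i ∈ s, P i ^ p⁻¹) ^ p
      ≤ ((∑ i ∈ s, w i) ^ (1 - p⁻¹) * (∑ i ∈ s, P i * w i ^ (1 - p)) ^ p⁻¹) ^ p :=
        rpow_le_rpow (sum_nonneg fun i _ => rpow_nonneg (hP i) _) holder hp0.le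
    _ = (∑ i ∈ s, w i) ^ (p - 1) * ∑ i ∈ s, P i * w i ^ (1 - p) := by
        rw [mul_rpow (rpow_nonneg hW _) (rpow_nonneg hS _), ← rpow_mul hW, ← rpow_mul hS,
          inv_mul_cancel₀ hp0.ne', rpow_one, sub_mul, inv_mul_cancel₀ hp0.ne', one_mul]

theorem kraft_holder_core_general
    (A : Type*) [Fintype A]
    (P : A → ℝ) (hP : ∀ a, 0 ≤ P a)
    (L' : A → ℝ) (γ : ℝ)
    (hKraft : ∑ a, (2 : ℝ) ^ (-(L' a)) ≤ 2 ^ γ)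
    (l : ℝ) (hl : 0 < l) :
    ∑ a, P a * (2 : ℝ) ^ (l * L' a) ≥
      (2 : ℝ) ^ (-(l * γ)) * (∑ a, (P a) ^ (1 / (1 + l))) ^ (1 + l) := by
  have hholder := rpow_sum_rpow_inv_le_sum_rpow_mul_sum_mul_rpow univ
    (by linarith : 1 ≤ 1 + l) hP (w := fun a => (2 : ℝ) ^ (-(L' a))) fun a => by positivity
  have hpow (a : A) : ((2 : ℝ) ^ (-(L' a))) ^ (1 - (1 + l)) = 2 ^ (l * L' a) := by
    rw [← rpow_mul zero_le_two]; ring_nf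
  have hkraft : (∑ a, (2 : ℝ) ^ (-(L' a))) ^ l ≤ 2 ^ (l * γ) := by
    rw [mul_comm, rpow_mul zero_le_two]
    exact rpow_le_rpow (by positivity) hKraft hl.le
  simp only [hpow, add_sub_cancel_left, ← one_div] at hholder
  rw [ge_iff_le, rpow_neg zero_le_two, inv_mul_le_iff₀ (by positivity)]
  exact hholder.trans (mul_le_mul_of_nonneg_right hkraft
    (sum_nonneg fun a _ => mul_nonneg (hP a) (by positivity)))

theorem kraft_holder_core
    (A : Type*) [Fintype A] [Nonempty A]
    (P : A → ℝ) (hP : ∀ a, 0 ≤ P a) (hPsum : ∑ a, P a = 1)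
    (L' : A → ℝ) (γ : ℝ) (hγ : 0 ≤ γ)
    (hKraft : ∑ a, (2 : ℝ) ^ (-(L' a)) ≤ 2 ^ γ)
    (l : ℝ) (hl : 0 < l) :
    ∑ a, P a * (2 : ℝ) ^ (l * L' a) ≥
      (2 : ℝ) ^ (-(l * γ)) * (∑ a, (P a) ^ (1 / (1 + l))) ^ (1 + l) :=
  kraft_holder_core_general A P hP L' γ hKraft l hl
end

section
/- Let λ > 0, s ≥ 1 an integer, c ≥ 1 an integer, and let ℓ : Fin c → ℕ be a function such that for every j ∈ ℕ, the number of indices i with ℓ(i) = j is at most s²·2^j. Then ∑_{i} 2^{λ ℓ(i)} ≥ s²·(2^{(k+1)(λ+1)} − 1)/(2^{λ+1} − 1), where k is the largest integer with s²(2^{k+1} − 1) ≤ c. -/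
/-
Ideal packing. For a monotone weight `w`, write `w n = w 0 + ∑_{m < n} (w (m+1) - w m)`: the
increment `w (m+1) - w m` is paid once by every index `i` with `m < ℓ i`. At most
`T m = ∑_{j ≤ m} N j` indices have `ℓ i ≤ m`, so at least `c - T m ≥ T k - T m` indices pay it,
which is exactly what the ideal packing (`N j` indices of length `j` for each `j ≤ k`) pays, by
summation by parts. With `w n = 2 ^ (λ n)` and `N j = s² 2 ^ j` the ideal packing costs the
geometric sum `s² ∑_{j ≤ k} (2 ^ (λ + 1)) ^ j`.
-/

open Finset Real

lemma sum_range_ite_lt_sub (w : ℕ → ℝ) (n k : ℕ) :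
    ∑ m ∈ range k, (if m < n then w (m + 1) - w m else 0) = w (min n k) - w 0 := by
  rw [← sum_filter, show (range k).filter (· < n) = range (min n k) by ext; simp [and_comm],
    sum_range_sub]

lemma sum_range_mul_eq_by_parts (N w : ℕ → ℝ) (k : ℕ) :
    ∑ j ∈ range (k + 1), N j * w j =
      (∑ j ∈ range (k + 1), N j) * w 0 + ∑ m ∈ range k,
        (w (m + 1) - w m) * (∑ j ∈ range (k + 1), N j - ∑ j ∈ range (m + 1), N j) := by
  have hw : w k = w 0 + ∑ m ∈ range k, (w (m + 1) - w m) := by rw [sum_range_sub]; ring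
  have := sum_range_by_parts w N (k + 1)
  simp only [smul_eq_mul, add_tsub_cancel_right, hw] at this
  simp only [mul_comm (N _), this, mul_sub, sum_sub_distrib, ← sum_mul]
  ring

section Packing

variable {ι : Type*} [Fintype ι] {f : ι → ℕ} {w : ℕ → ℝ}

lemma card_mul_add_sum_mul_card_lt_le_sum (hw : Monotone w) (k : ℕ) :
    Fintype.card ι * w 0 + ∑ m ∈ range k, (w (m + 1) - w m) * #{i | m < f i}
      ≤ ∑ i, w (f i) := by
  have hlayer (i : ι) : w 0 + ∑ m ∈ range k, (if m < f i then w (m + 1) - w m else 0)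
      ≤ w (f i) := by
    rw [sum_range_ite_lt_sub]
    linarith [hw (min_le_left (f i) k)]
  refine le_trans (le_of_eq ?_) (sum_le_sum fun i _ => hlayer i)
  rw [sum_add_distrib, sum_comm]
  simp only [sum_const, card_univ, nsmul_eq_mul, sum_ite, zero_mul, add_zero, mul_comm]

lemma card_filter_le_le_sum_range {N : ℕ → ℕ} (hN : ∀ j, #{i | f i = j} ≤ N j) (m : ℕ) :
    #{i | f i ≤ m} ≤ ∑ j ∈ range (m + 1), N j := by
  rw [card_eq_sum_card_fiberwise (f := f) (t := range (m + 1)) fun i hi => by simp at hi ⊢; omega]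
  refine sum_le_sum fun j _ => le_trans (card_le_card fun i => ?_) (hN j)
  simp +contextual

lemma card_le_card_filter_lt_add {N : ℕ → ℕ} (hN : ∀ j, #{i | f i = j} ≤ N j) (m : ℕ) :
    Fintype.card ι ≤ #{i | m < f i} + ∑ j ∈ range (m + 1), N j := by
  have := card_filter_add_card_filter_not (s := univ) (fun i => f i ≤ m)
  simp only [not_le, card_univ] at this
  linarith [card_filter_le_le_sum_range hN m]

lemma sum_range_mul_le_sum_of_card_fiber_le (hw : Monotone w) (hw0 : 0 ≤ w 0) {N : ℕ → ℕ}
    (hN : ∀ j, #{i | f i = j} ≤ N j) (k : ℕ)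
    (hk : ∑ j ∈ range (k + 1), N j ≤ Fintype.card ι) :
    ∑ j ∈ range (k + 1), (N j : ℝ) * w j ≤ ∑ i, w (f i) := by
  rw [sum_range_mul_eq_by_parts]
  refine le_trans ?_ (card_mul_add_sum_mul_card_lt_le_sum hw k)
  gcongr with m
  · exact_mod_cast hk
  · exact sub_nonneg.2 (hw (Nat.le_succ m))
  · rw [sub_le_iff_le_add]
    exact_mod_cast hk.trans (card_le_card_filter_lt_add hN m)

end Packing

theorem packing_lower_bound_general
    (l : ℝ) (hl : 0 < l) (s c : ℕ)
    (len : Fin c → ℕ)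
    (hcount : ∀ j : ℕ, ((Finset.univ.filter (fun i => len i = j)).card) ≤ s ^ 2 * 2 ^ j)
    (k : ℕ)
    (hk : s ^ 2 * (2 ^ (k + 1) - 1) ≤ c) :
    ∑ i, (2 : ℝ) ^ (l * (len i : ℝ)) ≥
      (s : ℝ) ^ 2 * ((2 : ℝ) ^ (((k : ℝ) + 1) * (l + 1)) - 1) / ((2 : ℝ) ^ (l + 1) - 1) := by
  set a : ℝ := 2 ^ l
  have ha : 1 ≤ a := one_le_rpow one_le_two hl.le
  have hcard : ∑ j ∈ range (k + 1), s ^ 2 * 2 ^ j ≤ Fintype.card (Fin c) := by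
    rw [← mul_sum, Nat.geomSum_eq le_rfl]
    simpa using hk
  have hpack := sum_range_mul_le_sum_of_card_fiber_le (f := len) (w := (a ^ ·))
    (pow_right_mono₀ ha) zero_le_one hcount k hcard
  have h2a : (2 : ℝ) ^ (l + 1) = 2 * a := by rw [rpow_add_one two_ne_zero, mul_comm]
  have h2ak : (2 : ℝ) ^ (((k : ℝ) + 1) * (l + 1)) = (2 * a) ^ (k + 1) := by
    rw [mul_comm, rpow_mul zero_le_two, h2a, ← Nat.cast_add_one, rpow_natCast]
  rw [ge_iff_le, h2ak, h2a, mul_div_assoc, ← geom_sum_eq (by linarith), mul_sum]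
  simp_rw [rpow_mul zero_le_two, rpow_natCast]
  convert hpack using 2 with j
  push_cast
  ring

theorem packing_lower_bound
    (l : ℝ) (hl : 0 < l) (s c : ℕ) (hs : 1 ≤ s) (hc : 1 ≤ c)
    (len : Fin c → ℕ)
    (hcount : ∀ j : ℕ, ((Finset.univ.filter (fun i => len i = j)).card) ≤ s ^ 2 * 2 ^ j)
    (k : ℕ)
    (hk : s ^ 2 * (2 ^ (k + 1) - 1) ≤ c)
    (hkmax : ∀ k' : ℕ, s ^ 2 * (2 ^ (k' + 1) - 1) ≤ c → k' ≤ k) :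
    ∑ i, (2 : ℝ) ^ (l * (len i : ℝ)) ≥
      (s : ℝ) ^ 2 * ((2 : ℝ) ^ (((k : ℝ) + 1) * (l + 1)) - 1) / ((2 : ℝ) ^ (l + 1) - 1) :=
  packing_lower_bound_general l hl s c len hcount k hk
end

section
/- Let λ > 0, s ≥ 1, c ≥ s² integers, and ℓ : Fin c → ℕ with |{i : ℓ(i) = j}| ≤ s²·2^j for all j ∈ ℕ. Then ∑_{i} 2^{λ ℓ(i)} ≥ s²·(2^{(λ+1)·log₂((c+s²)/(2s²))} − 1)/(2^{λ+1} − 1). -/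
open Finset Real

lemma tel_aux (x : ℝ) (n : ℕ) : ∑ j ∈ Finset.range n, (x^(j+1) - x^j) = x^n - 1 := by
  simpa using Finset.sum_range_sub (fun j => x^j) n

lemma ident_aux (x : ℝ) (k : ℕ) :
    ((2:ℝ)^k - 1) + ∑ j ∈ Finset.range k, (x^(j+1) - x^j) * ((2:ℝ)^k - 2^(j+1))
      = ∑ j ∈ Finset.range k, (2*x)^j := by
  induction k with
  | zero => simp
  | succ n ih =>
    rw [Finset.sum_range_succ (f := fun j => (2*x)^j), Finset.sum_range_succ]
    have e : ∀ j ∈ Finset.range n,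
        (x^(j+1) - x^j) * ((2:ℝ)^(n+1) - 2^(j+1))
          = (x^(j+1)-x^j) * ((2:ℝ)^n - 2^(j+1)) + 2^n * (x^(j+1) - x^j) := by
      intro j _; ring
    rw [Finset.sum_congr rfl e, Finset.sum_add_distrib, ← Finset.mul_sum, tel_aux]
    linear_combination ih

theorem theorem2_lower_bound
    (l : ℝ) (hl : 0 < l) (s c : ℕ) (hs : 1 ≤ s) (hc : s ^ 2 ≤ c)
    (len : Fin c → ℕ)
    (hcount : ∀ j : ℕ, ((Finset.univ.filter (fun i => len i = j)).card) ≤ s ^ 2 * 2 ^ j) :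
    ∑ i, (2 : ℝ) ^ (l * (len i : ℝ)) ≥
      (s : ℝ) ^ 2 *
        ((2 : ℝ) ^ ((l + 1) * Real.logb 2 (((c : ℝ) + (s : ℝ) ^ 2) / (2 * (s : ℝ) ^ 2))) - 1) /
        ((2 : ℝ) ^ (l + 1) - 1) := by
  classical
  have hs0 : 0 < s := hs
  have hs2 : 0 < s ^ 2 := by positivity
  set k := Nat.log 2 ((c + s ^ 2) / s ^ 2) with hk
  -- natural number facts about k
  have hA : s ^ 2 * 2 ^ k ≤ c + s ^ 2 := by
    calc s ^ 2 * 2 ^ k ≤ s ^ 2 * ((c + s ^ 2) / s ^ 2) :=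
          Nat.mul_le_mul_left _ (Nat.pow_log_le_self 2 (by
            have : 1 ≤ (c + s ^ 2) / s ^ 2 := (Nat.one_le_div_iff hs2).2 (by omega)
            omega))
      _ ≤ c + s ^ 2 := Nat.mul_div_le _ _
  have hB : c + s ^ 2 < s ^ 2 * 2 ^ (k + 1) := by
    have h1 := Nat.lt_pow_succ_log_self (by norm_num : 1 < 2) ((c + s ^ 2) / s ^ 2)
    have h2 := (Nat.div_lt_iff_lt_mul hs2).1 h1
    calc c + s ^ 2 < 2 ^ (k+1) * s ^ 2 := h2
      _ = s ^ 2 * 2 ^ (k+1) := by ring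
  -- counting bound
  have hle : ∀ j : ℕ, ((univ.filter (fun i => len i ≤ j)).card) ≤ s ^ 2 * (2 ^ (j+1) - 1) := by
    intro j
    induction j with
    | zero =>
      have he : (univ.filter (fun i : Fin c => len i ≤ 0)) = (univ.filter (fun i => len i = 0)) := by
        apply Finset.filter_congr; intro i _; simp [Nat.le_zero]
      rw [he]
      simpa using hcount 0
    | succ n ih =>
      have hsub : (univ.filter (fun i : Fin c => len i ≤ n+1)) ⊆
          (univ.filter (fun i => len i ≤ n)) ∪ (univ.filter (fun i => len i = n+1)) := by
        intro i hi; simp only [Finset.mem_filter, Finset.mem_union, Finset.mem_univ, true_and] at hi ⊢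
        omega
      have h1 := Finset.card_le_card hsub
      have h2 := Finset.card_union_le (univ.filter (fun i : Fin c => len i ≤ n))
        (univ.filter (fun i : Fin c => len i = n+1))
      have h3 := hcount (n+1)
      have hp : 1 ≤ (2:ℕ) ^ (n+1) := Nat.one_le_two_pow
      have hkey : s ^ 2 * (2 ^ (n+1) - 1) + s ^ 2 * 2 ^ (n+1) = s ^ 2 * (2 ^ (n+1+1) - 1) := by
        have hp2 : (2:ℕ) ^ (n+1+1) = 2 * 2 ^ (n+1) := by ring
        rw [← Nat.left_distrib]
        congr 1
        omega
      calc (univ.filter (fun i : Fin c => len i ≤ n+1)).card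
          ≤ ((univ.filter (fun i : Fin c => len i ≤ n)) ∪ (univ.filter (fun i => len i = n+1))).card := h1
        _ ≤ (univ.filter (fun i : Fin c => len i ≤ n)).card + (univ.filter (fun i : Fin c => len i = n+1)).card := h2
        _ ≤ s ^ 2 * (2 ^ (n+1) - 1) + s ^ 2 * 2 ^ (n+1) := Nat.add_le_add ih h3
        _ = s ^ 2 * (2 ^ (n+1+1) - 1) := hkey
  -- real setup
  set x : ℝ := (2:ℝ) ^ l with hxdef
  have hx1 : 1 < x := by
    rw [hxdef]
    exact Real.one_lt_rpow_iff_of_pos two_pos |>.2 (Or.inl ⟨one_lt_two, hl⟩)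
  have hsummand : ∀ i : Fin c, (2:ℝ) ^ (l * (len i : ℝ)) = x ^ (len i) := by
    intro i
    rw [hxdef, ← Real.rpow_natCast ((2:ℝ)^l) (len i), ← Real.rpow_mul (by norm_num)]
  set M := k + ((Finset.univ.sup len) + 1) with hM
  have hlenM : ∀ i, len i < M := by
    intro i
    have := Finset.le_sup (f := len) (Finset.mem_univ i)
    omega
  have hkM : k ≤ M := by omega
  set A : ℕ → ℕ := fun j => (univ.filter (fun i : Fin c => j < len i)).card with hAdef
  -- layer cake
  have h1 : ∀ i : Fin c,
      ∑ j ∈ Finset.range M, (if j < len i then x^(j+1) - x^j else 0) = x ^ (len i) - 1 := by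
    intro i
    rw [← Finset.sum_filter]
    have he : (Finset.range M).filter (fun j => j < len i) = Finset.range (len i) := by
      ext j
      simp only [Finset.mem_filter, Finset.mem_range]
      have := hlenM i
      omega
    rw [he, tel_aux]
  have h2 : ∑ i, x ^ (len i) = (c : ℝ) + ∑ j ∈ Finset.range M, (x^(j+1) - x^j) * (A j : ℝ) := by
    have he : ∑ i, x ^ (len i)
        = ∑ i : Fin c, (1 + ∑ j ∈ Finset.range M, (if j < len i then x^(j+1) - x^j else 0)) := by
      apply Finset.sum_congr rfl
      intro i _
      rw [h1 i]; ring
    rw [he, Finset.sum_add_distrib, Finset.sum_const, Finset.card_univ, Fintype.card_fin]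
    congr 1
    · simp
    rw [Finset.sum_comm]
    apply Finset.sum_congr rfl
    intro j _
    rw [← Finset.sum_filter, Finset.sum_const, nsmul_eq_mul, mul_comm]
  -- per-j lower bound on A j
  have h3 : ∀ j : ℕ, (c : ℝ) ≤ (A j : ℝ) + (s:ℝ)^2 * ((2:ℝ)^(j+1) - 1) := by
    intro j
    have hsplit := Finset.card_filter_add_card_filter_not
      (s := (univ : Finset (Fin c))) (p := fun i => j < len i)
    have hneg : (univ.filter (fun i : Fin c => ¬ j < len i)) = (univ.filter (fun i => len i ≤ j)) := by
      apply Finset.filter_congr; intro i _; simp [Nat.not_lt]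
    rw [hneg, Finset.card_univ, Fintype.card_fin] at hsplit
    have hnat : c ≤ A j + s ^ 2 * (2 ^ (j+1) - 1) := by
      have hAj : A j = (univ.filter (fun i : Fin c => j < len i)).card := rfl
      have := hle j
      omega
    have hpj : 1 ≤ (2:ℕ) ^ (j+1) := Nat.one_le_two_pow
    calc (c:ℝ) ≤ ((A j + s ^ 2 * (2 ^ (j+1) - 1) : ℕ) : ℝ) := by exact_mod_cast hnat
      _ = (A j : ℝ) + (s:ℝ)^2 * ((2:ℝ)^(j+1) - 1) := by
          push_cast [hpj]
          ring
  have hcR : (s:ℝ)^2 * ((2:ℝ)^k - 1) ≤ (c:ℝ) := by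
    have h := (Nat.cast_le (α := ℝ)).2 hA
    push_cast at h
    nlinarith [h]
  -- drop to range k
  have h4 : ∑ j ∈ Finset.range k, (x^(j+1) - x^j) * ((s:ℝ)^2 * 2^k - (s:ℝ)^2 * 2^(j+1))
      ≤ ∑ j ∈ Finset.range M, (x^(j+1) - x^j) * (A j : ℝ) := by
    have he : ∑ j ∈ Finset.range k, (x^(j+1) - x^j) * ((s:ℝ)^2 * 2^k - (s:ℝ)^2 * 2^(j+1))
        = ∑ j ∈ Finset.range M,
            (if j < k then (x^(j+1) - x^j) * ((s:ℝ)^2 * 2^k - (s:ℝ)^2 * 2^(j+1)) else 0) := by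
      rw [← Finset.sum_filter]
      congr 1
      ext j
      simp only [Finset.mem_filter, Finset.mem_range]
      omega
    rw [he]
    apply Finset.sum_le_sum
    intro j _
    have hΔ : 0 ≤ x^(j+1) - x^j := by
      have : x^j ≤ x^(j+1) := pow_le_pow_right₀ (le_of_lt hx1) (by omega)
      linarith
    by_cases hj : j < k
    · simp only [if_pos hj]
      apply mul_le_mul_of_nonneg_left _ hΔ
      have h3j := h3 j
      nlinarith [h3j, hcR]
    · simp only [if_neg hj]
      exact mul_nonneg hΔ (Nat.cast_nonneg _)
  -- identity
  have h5 : (s:ℝ)^2 * ((2:ℝ)^k - 1)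
        + ∑ j ∈ Finset.range k, (x^(j+1) - x^j) * ((s:ℝ)^2 * 2^k - (s:ℝ)^2 * 2^(j+1))
      = (s:ℝ)^2 * ∑ j ∈ Finset.range k, (2*x)^j := by
    calc (s:ℝ)^2 * ((2:ℝ)^k - 1)
        + ∑ j ∈ Finset.range k, (x^(j+1) - x^j) * ((s:ℝ)^2 * 2^k - (s:ℝ)^2 * 2^(j+1))
        = (s:ℝ)^2 * (((2:ℝ)^k - 1)
            + ∑ j ∈ Finset.range k, (x^(j+1) - x^j) * ((2:ℝ)^k - 2^(j+1))) := by
          rw [mul_add, Finset.mul_sum]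
          congr 1
          apply Finset.sum_congr rfl
          intro j _
          ring
      _ = (s:ℝ)^2 * ∑ j ∈ Finset.range k, (2*x)^j := by rw [ident_aux]
  have h6 : (s:ℝ)^2 * ∑ j ∈ Finset.range k, (2*x)^j ≤ ∑ i, x ^ (len i) := by
    rw [h2, ← h5]
    linarith [h4, hcR]
  -- geometric sum
  have hxx : (2:ℝ) * x = (2:ℝ) ^ (l + 1) := by
    rw [hxdef, Real.rpow_add two_pos, Real.rpow_one]
    ring
  have hy1 : (1:ℝ) < (2:ℝ) ^ (l+1) := by
    exact Real.one_lt_rpow_iff_of_pos two_pos |>.2 (Or.inl ⟨one_lt_two, by linarith⟩)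
  have hgeom : ∑ j ∈ Finset.range k, (2*x)^j = (((2:ℝ)^(l+1))^k - 1) / ((2:ℝ)^(l+1) - 1) := by
    rw [hxx]
    exact geom_sum_eq (ne_of_gt hy1) k
  -- exponent comparison
  have hmk : Real.logb 2 (((c:ℝ) + (s:ℝ)^2) / (2 * (s:ℝ)^2)) ≤ (k:ℝ) := by
    have hpos : (0:ℝ) < ((c:ℝ) + (s:ℝ)^2) / (2 * (s:ℝ)^2) := by positivity
    rw [Real.logb_le_iff_le_rpow one_lt_two hpos]
    rw [div_le_iff₀ (by positivity), Real.rpow_natCast]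
    have hcast : (c:ℝ) + (s:ℝ)^2 ≤ (s:ℝ)^2 * 2^(k+1) := by exact_mod_cast hB.le
    have hps : (2:ℝ)^(k+1) = 2^k * 2 := pow_succ 2 k
    nlinarith [hcast]
  have hexp : (2:ℝ) ^ ((l+1) * Real.logb 2 (((c:ℝ) + (s:ℝ)^2) / (2 * (s:ℝ)^2)))
      ≤ ((2:ℝ)^(l+1))^k := by
    have hmm : (l+1) * Real.logb 2 (((c:ℝ) + (s:ℝ)^2) / (2 * (s:ℝ)^2)) ≤ (l+1) * k :=
      mul_le_mul_of_nonneg_left hmk (by linarith)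
    calc (2:ℝ) ^ ((l+1) * Real.logb 2 (((c:ℝ) + (s:ℝ)^2) / (2 * (s:ℝ)^2)))
        ≤ (2:ℝ) ^ ((l+1) * (k:ℝ)) := Real.rpow_le_rpow_of_exponent_le one_le_two hmm
      _ = ((2:ℝ)^(l+1))^k := by
          rw [Real.rpow_mul (by norm_num), Real.rpow_natCast]
  -- final assembly
  have hyd : (0:ℝ) < (2:ℝ)^(l+1) - 1 := by linarith
  have hLHS : ∑ i, (2:ℝ)^(l * (len i:ℝ)) = ∑ i, x ^ (len i) :=
    Finset.sum_congr rfl (fun i _ => hsummand i)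
  rw [ge_iff_le, hLHS]
  calc (s : ℝ) ^ 2 *
        ((2 : ℝ) ^ ((l + 1) * Real.logb 2 (((c : ℝ) + (s : ℝ) ^ 2) / (2 * (s : ℝ) ^ 2))) - 1) /
        ((2 : ℝ) ^ (l + 1) - 1)
      ≤ (s:ℝ)^2 * (((2:ℝ)^(l+1))^k - 1) / ((2:ℝ)^(l+1) - 1) := by
        gcongr

    _ = (s:ℝ)^2 * ∑ j ∈ Finset.range k, (2*x)^j := by
        rw [hgeom, mul_div_assoc]
    _ ≤ ∑ i, x ^ (len i) := h6
end

section
/- Let α ≥ 1 be an integer, λ > 0 a real, and c ≥ 1 an integer. Then ∑_{i=1}^{c} 2^{λ·⌈log₂(α i)⌉} ≤ (2α)^λ · 2^{(λ+1)·log₂ c}. -/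
open Finset Real

theorem lz78_upper_bound
    (α : ℕ) (hα : 1 ≤ α) (l : ℝ) (hl : 0 < l) (c : ℕ) (hc : 1 ≤ c) :
    ∑ i ∈ Finset.Icc 1 c, (2 : ℝ) ^ (l * (⌈Real.logb 2 ((α : ℝ) * (i : ℝ))⌉ : ℝ)) ≤
      (2 * (α : ℝ)) ^ l * (2 : ℝ) ^ ((l + 1) * Real.logb 2 (c : ℝ)) := by
  have hc0 : (0:ℝ) < (c:ℝ) := by exact_mod_cast Nat.lt_of_lt_of_le Nat.zero_lt_one hc
  have hα0 : (0:ℝ) < (α:ℝ) := by exact_mod_cast hα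
  have key : ∀ i ∈ Finset.Icc 1 c,
      (2:ℝ) ^ (l * (⌈Real.logb 2 ((α:ℝ)*(i:ℝ))⌉ : ℝ)) ≤ (2*(α:ℝ))^l * (c:ℝ)^l := by
    intro i hi
    simp only [Finset.mem_Icc] at hi
    have hi0 : (0:ℝ) < (i:ℝ) := by exact_mod_cast Nat.lt_of_lt_of_le Nat.zero_lt_one hi.1
    have hai : (0:ℝ) < (α:ℝ)*(i:ℝ) := mul_pos hα0 hi0
    have h1 : (⌈Real.logb 2 ((α:ℝ)*(i:ℝ))⌉ : ℝ) ≤ Real.logb 2 ((α:ℝ)*(i:ℝ)) + 1 :=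
      (Int.ceil_lt_add_one _).le
    calc (2:ℝ) ^ (l * (⌈Real.logb 2 ((α:ℝ)*(i:ℝ))⌉ : ℝ))
        ≤ (2:ℝ) ^ (l * (Real.logb 2 ((α:ℝ)*(i:ℝ)) + 1)) := by
          apply Real.rpow_le_rpow_of_exponent_le one_le_two
          exact mul_le_mul_of_nonneg_left h1 hl.le
      _ = ((α:ℝ)*(i:ℝ)) ^ l * 2 ^ l := by
          rw [mul_add, mul_one, Real.rpow_add two_pos, mul_comm l,
            Real.rpow_mul (by norm_num : (0:ℝ) ≤ 2),
            Real.rpow_logb two_pos (by norm_num) hai]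
      _ ≤ ((α:ℝ)*(c:ℝ)) ^ l * 2 ^ l := by
          gcongr
          exact_mod_cast hi.2
      _ = (2*(α:ℝ))^l * (c:ℝ)^l := by
          rw [Real.mul_rpow hα0.le hc0.le, Real.mul_rpow (by norm_num : (0:ℝ) ≤ 2) hα0.le]
          ring
  calc ∑ i ∈ Finset.Icc 1 c, (2:ℝ) ^ (l * (⌈Real.logb 2 ((α:ℝ)*(i:ℝ))⌉ : ℝ))
      ≤ ∑ _i ∈ Finset.Icc 1 c, (2*(α:ℝ))^l * (c:ℝ)^l := Finset.sum_le_sum key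
    _ = (c:ℝ) * ((2*(α:ℝ))^l * (c:ℝ)^l) := by
        rw [Finset.sum_const, Nat.card_Icc, nsmul_eq_mul]
        norm_num
    _ = (2*(α:ℝ))^l * (2:ℝ) ^ ((l + 1) * Real.logb 2 (c:ℝ)) := by
        rw [mul_comm (l+1), Real.rpow_mul (by norm_num : (0:ℝ) ≤ 2),
          Real.rpow_logb two_pos (by norm_num) hc0,
          Real.rpow_add hc0, Real.rpow_one]
        ring
end

section
/- Let A, U be nonempty finite sets, λ > 0, γ ≥ 0, and let P be a joint probability distribution on A × U. Let L' : A × U → ℝ satisfy ∑_{a∈A} 2^{-L'(a,u)} ≤ 2^{γ} for every u ∈ U. Then ∑_{(a,u)} P(a,u)·2^{λ L'(a,u)} ≥ 2^{-λγ} · ∑_{u∈U} (∑_{a∈A} P(a,u)^{1/(1+λ)})^{1+λ}. -/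
open Finset Real

/-!
For fixed `u`, Hölder's inequality with exponents `1 + λ` and `(1 + λ) / λ`, applied to the
factorization `P ^ (1/(1+λ)) = (P 2^{λ L'}) ^ (1/(1+λ)) · (2^{-L'}) ^ (λ/(1+λ))`, gives
`(∑_a P(a,u) ^ (1/(1+λ))) ^ (1+λ) ≤ (∑_a P(a,u) 2^{λ L'(a,u)}) · (∑_a 2^{-L'(a,u)}) ^ λ`,
and the Kraft sum is at most `2^γ`. Summing over `u` gives the bound.
-/

lemma sum_rpow_one_div_one_add_rpow_le {ι : Type*} (s : Finset ι) {l : ℝ} (hl : 0 < l)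
    {f w : ι → ℝ} (hf : ∀ i, 0 ≤ f i) (hw : ∀ i, 0 < w i) :
    (∑ i ∈ s, f i ^ (1 / (1 + l))) ^ (1 + l) ≤
      (∑ i ∈ s, f i * w i ^ (-l)) * (∑ i ∈ s, w i) ^ l := by
  have hp : 0 < 1 + l := by linarith
  have holder := inner_le_weight_mul_Lp_of_nonneg s (p := 1 + l) (by linarith) w
    (fun i => f i ^ (1 / (1 + l)) * (w i)⁻¹) (fun i => (hw i).le)
    (fun i => mul_nonneg (rpow_nonneg (hf i) _) (inv_nonneg.2 (hw i).le))
  have hlin : ∀ i, w i * (f i ^ (1 / (1 + l)) * (w i)⁻¹) = f i ^ (1 / (1 + l)) := fun i => by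
    field_simp [(hw i).ne']
  have hpow : ∀ i, w i * (f i ^ (1 / (1 + l)) * (w i)⁻¹) ^ (1 + l) = f i * w i ^ (-l) := fun i => by
    rw [mul_rpow (rpow_nonneg (hf i) _) (inv_nonneg.2 (hw i).le), ← rpow_mul (hf i),
      one_div_mul_cancel hp.ne', rpow_one, inv_rpow (hw i).le, ← rpow_neg (hw i).le,
      mul_left_comm, ← rpow_one_add' (hw i).le (by linarith)]
    ring_nf
  simp only [hlin, hpow] at holder
  have hW : 0 ≤ ∑ i ∈ s, w i := sum_nonneg fun i _ => (hw i).le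
  have hS : 0 ≤ ∑ i ∈ s, f i * w i ^ (-l) :=
    sum_nonneg fun i _ => mul_nonneg (hf i) (rpow_nonneg (hw i).le _)
  calc (∑ i ∈ s, f i ^ (1 / (1 + l))) ^ (1 + l)
      ≤ ((∑ i ∈ s, w i) ^ (1 - (1 + l)⁻¹) * (∑ i ∈ s, f i * w i ^ (-l)) ^ (1 + l)⁻¹) ^ (1 + l) :=
        rpow_le_rpow (sum_nonneg fun i _ => rpow_nonneg (hf i) _) holder hp.le
    _ = (∑ i ∈ s, f i * w i ^ (-l)) * (∑ i ∈ s, w i) ^ l := by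
        rw [mul_rpow (rpow_nonneg hW _) (rpow_nonneg hS _), ← rpow_mul hW, ← rpow_mul hS,
          inv_mul_cancel₀ hp.ne', rpow_one, mul_comm]
        congr 2
        field_simp
        ring

lemma sum_rpow_one_div_one_add_rpow_le_of_kraft {ι : Type*} (s : Finset ι) {l : ℝ} (hl : 0 < l)
    {f : ι → ℝ} (hf : ∀ i, 0 ≤ f i) {L : ι → ℝ} {γ : ℝ}
    (hKraft : ∑ i ∈ s, (2 : ℝ) ^ (-L i) ≤ 2 ^ γ) :
    (∑ i ∈ s, f i ^ (1 / (1 + l))) ^ (1 + l) ≤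
      (2 : ℝ) ^ (l * γ) * ∑ i ∈ s, f i * (2 : ℝ) ^ (l * L i) := by
  have h2 : (0 : ℝ) ≤ 2 := by norm_num
  have hcode : ∀ i, ((2 : ℝ) ^ (-L i)) ^ (-l) = 2 ^ (l * L i) := fun i => by
    rw [← rpow_mul h2]
    ring_nf
  calc (∑ i ∈ s, f i ^ (1 / (1 + l))) ^ (1 + l)
      ≤ (∑ i ∈ s, f i * ((2 : ℝ) ^ (-L i)) ^ (-l)) * (∑ i ∈ s, (2 : ℝ) ^ (-L i)) ^ l :=
        sum_rpow_one_div_one_add_rpow_le s hl hf fun i => rpow_pos_of_pos two_pos _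
    _ ≤ (∑ i ∈ s, f i * (2 : ℝ) ^ (l * L i)) * ((2 : ℝ) ^ γ) ^ l := by
        simp only [hcode]
        gcongr
        exact sum_nonneg fun i _ => mul_nonneg (hf i) (rpow_nonneg h2 _)
    _ = (2 : ℝ) ^ (l * γ) * ∑ i ∈ s, f i * (2 : ℝ) ^ (l * L i) := by
        rw [← rpow_mul h2, mul_comm γ, mul_comm]

theorem side_info_kraft_holder_general
    (A U : Type*) [Fintype A] [Fintype U]
    (l : ℝ) (hl : 0 < l) (γ : ℝ)
    (P : A × U → ℝ) (hP : ∀ p, 0 ≤ P p)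
    (L' : A × U → ℝ)
    (hKraft : ∀ u : U, ∑ a, (2 : ℝ) ^ (-(L' (a, u))) ≤ 2 ^ γ) :
    ∑ p, P p * (2 : ℝ) ^ (l * L' p) ≥
      (2 : ℝ) ^ (-(l * γ)) * ∑ u, (∑ a, (P (a, u)) ^ (1 / (1 + l))) ^ (1 + l) := by
  have hcond : ∀ u, (∑ a, P (a, u) ^ (1 / (1 + l))) ^ (1 + l) ≤
      (2 : ℝ) ^ (l * γ) * ∑ a, P (a, u) * (2 : ℝ) ^ (l * L' (a, u)) := fun u =>
    sum_rpow_one_div_one_add_rpow_le_of_kraft univ hl (fun a => hP (a, u)) (hKraft u)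
  calc (2 : ℝ) ^ (-(l * γ)) * ∑ u, (∑ a, P (a, u) ^ (1 / (1 + l))) ^ (1 + l)
      ≤ (2 : ℝ) ^ (-(l * γ)) * ∑ u, (2 : ℝ) ^ (l * γ) * ∑ a, P (a, u) * (2 : ℝ) ^ (l * L' (a, u)) := by
        gcongr with u
        exact hcond u
    _ = ∑ p, P p * (2 : ℝ) ^ (l * L' p) := by
        rw [← mul_sum, ← mul_assoc, ← rpow_add two_pos, neg_add_cancel, rpow_zero, one_mul,
          Fintype.sum_prod_type_right]

theorem side_info_kraft_holder
    (A U : Type*) [Fintype A] [Fintype U] [Nonempty A] [Nonempty U]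
    (l : ℝ) (hl : 0 < l) (γ : ℝ) (hγ : 0 ≤ γ)
    (P : A × U → ℝ) (hP : ∀ p, 0 ≤ P p) (hPsum : ∑ p, P p = 1)
    (L' : A × U → ℝ)
    (hKraft : ∀ u : U, ∑ a, (2 : ℝ) ^ (-(L' (a, u))) ≤ 2 ^ γ) :
    ∑ p, P p * (2 : ℝ) ^ (l * L' p) ≥
      (2 : ℝ) ^ (-(l * γ)) * ∑ u, (∑ a, (P (a, u)) ^ (1 / (1 + l))) ^ (1 + l) :=
  side_info_kraft_holder_general A U l hl γ P hP L' hKraft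
end

section
/- Let λ > 0, s ≥ 1 an integer, and let the index set be partitioned into K groups of sizes c₁,…,c_K with c_k ≥ s² for each k. Suppose within each group k the lengths ℓ : Fin c_k → ℕ satisfy |{i : ℓ(i) = j}| ≤ s²·2^j for all j. Then the total sum ∑_k ∑_i 2^{λ ℓ_k(i)} ≥ (s²/(2^{λ+1}−1)) · ∑_{k=1}^{K} (2^{(λ+1)·log₂((c_k+s²)/(2s²))} − 1). -/
open Finset Real

/-!
The bound is proved group by group, for `N = s²` and `q = 2^λ`. For any threshold `m`, every
length `x` satisfies `q^m ≤ q^x + [x < m] (q^m - q^x)`; summing over a group and using that at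
most `N 2^j` lengths equal `j` gives
`∑ q^ℓ ≥ (c - N (2^m - 1)) q^m + N ∑_{j<m} (2q)^j`.
Choosing `m` with `N 2^m ≤ c + N < N 2^(m+1)` makes the first term nonnegative, and the geometric sum is
`N ((2q)^m - 1) / (2q - 1)` with `(2q)^m = (2^m)^(λ+1) ≥ ((c + N) / 2N)^(λ+1)`.
-/

section
variable {ι : Type*} [Fintype ι]

theorem Monotone.card_mul_le_sum_add_of_card_fiber_le {f : ℕ → ℝ} (hf : Monotone f)
    (len : ι → ℕ) (b : ℕ → ℝ) (hb : ∀ j, (#{i | len i = j} : ℝ) ≤ b j) (m : ℕ) :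
    Fintype.card ι * f m ≤ ∑ i, f (len i) + ∑ j ∈ range m, b j * (f m - f j) := by
  have pointwise (x : ℕ) :
      f m ≤ f x + ∑ j ∈ range m, if x = j then f m - f j else 0 := by
    rw [sum_ite_eq]
    split_ifs with hx
    · linarith
    · simpa using hf (not_lt.mp (by simpa using hx))
  calc (Fintype.card ι : ℝ) * f m = ∑ _i : ι, f m := by simp
    _ ≤ ∑ i, (f (len i) + ∑ j ∈ range m, if len i = j then f m - f j else 0) :=
      sum_le_sum fun i _ => pointwise (len i)
    _ = ∑ i, f (len i) + ∑ j ∈ range m, (#{i | len i = j} : ℝ) * (f m - f j) := by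
      rw [sum_add_distrib, sum_comm]
      congr 1
      refine sum_congr rfl fun j _ => ?_
      rw [← sum_filter, sum_const, nsmul_eq_mul]
    _ ≤ ∑ i, f (len i) + ∑ j ∈ range m, b j * (f m - f j) := by
      gcongr with j hj
      · exact sub_nonneg.mpr (hf (mem_range.mp hj).le)
      · exact hb j

theorem mul_geom_sum_le_sum_pow_of_card_fiber_le {q : ℝ} (hq : 1 ≤ q) (N : ℝ)
    (len : ι → ℕ) (hcount : ∀ j, (#{i | len i = j} : ℝ) ≤ N * 2 ^ j) (m : ℕ)
    (hm : N * (2 ^ m - 1) ≤ Fintype.card ι) :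
    N * ∑ j ∈ range m, (2 * q) ^ j ≤ ∑ i, q ^ len i := by
  have key := (pow_right_mono₀ hq).card_mul_le_sum_add_of_card_fiber_le len _ hcount m
  have hsplit : ∑ j ∈ range m, N * 2 ^ j * (q ^ m - q ^ j)
      = N * (2 ^ m - 1) * q ^ m - N * ∑ j ∈ range m, (2 * q) ^ j := by
    simp only [mul_sub, sum_sub_distrib, ← sum_mul, ← mul_sum, mul_pow, mul_assoc]
    rw [geom_sum_eq (by norm_num : (2 : ℝ) ≠ 1)]
    ring
  have hslack : 0 ≤ (Fintype.card ι - N * (2 ^ m - 1)) * q ^ m :=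
    mul_nonneg (sub_nonneg.mpr hm) (pow_nonneg (by linarith) m)
  linarith

theorem two_rpow_mul_logb_le_pow {a x : ℝ} (ha : 0 ≤ a) (hx : 0 < x) {m : ℕ}
    (hxm : x ≤ 2 ^ m) : (2 : ℝ) ^ (a * logb 2 x) ≤ ((2 : ℝ) ^ a) ^ m := by
  rw [mul_comm, rpow_mul zero_le_two, rpow_logb zero_lt_two (by norm_num) hx,
    ← rpow_natCast, ← rpow_mul zero_le_two, mul_comm, rpow_mul zero_le_two, rpow_natCast]
  exact rpow_le_rpow hx.le hxm ha

theorem Nat.exists_mul_two_pow_le_lt (c : ℕ) {N : ℕ} (hN : 0 < N) :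
    ∃ m, N * 2 ^ m ≤ c + N ∧ c + N < N * 2 ^ (m + 1) := by
  refine ⟨Nat.log 2 ((c + N) / N), ?_, ?_⟩
  · calc N * 2 ^ Nat.log 2 ((c + N) / N) ≤ N * ((c + N) / N) :=
          Nat.mul_le_mul_left _ (Nat.pow_log_le_self 2 (by simp [Nat.add_div_right c hN]))
      _ ≤ c + N := Nat.mul_div_le _ _
  · rw [mul_comm, ← Nat.div_lt_iff_lt_mul hN]
    exact Nat.lt_pow_succ_log_self one_lt_two _

theorem packing_lower_bound_s11 {l : ℝ} (hl : 0 ≤ l) {N : ℕ} (hN : 0 < N) (len : ι → ℕ)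
    (hcount : ∀ j, #{i | len i = j} ≤ N * 2 ^ j) :
    (N : ℝ) / (2 ^ (l + 1) - 1) *
        ((2 : ℝ) ^ ((l + 1) * logb 2 ((Fintype.card ι + N) / (2 * N))) - 1) ≤
      ∑ i, (2 : ℝ) ^ (l * len i) := by
  obtain ⟨m, hlow, hhigh⟩ := Nat.exists_mul_two_pow_le_lt (Fintype.card ι) hN
  set q : ℝ := 2 ^ l
  have hq : 1 ≤ q := one_le_rpow one_le_two hl
  have htwo_q : (2 : ℝ) ^ (l + 1) = 2 * q := by rw [rpow_add_one two_ne_zero]; ring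
  have hNpos : (0 : ℝ) < N := by exact_mod_cast hN
  have hx : ((Fintype.card ι : ℝ) + N) / (2 * N) ≤ 2 ^ m := by
    rw [div_le_iff₀ (by positivity)]
    calc (Fintype.card ι : ℝ) + N ≤ N * 2 ^ (m + 1) := by exact_mod_cast hhigh.le
      _ = 2 ^ m * (2 * N) := by ring
  have hm : (N : ℝ) * (2 ^ m - 1) ≤ Fintype.card ι := by
    have : (N : ℝ) * 2 ^ m ≤ Fintype.card ι + N := by exact_mod_cast hlow
    linarith
  calc (N : ℝ) / (2 ^ (l + 1) - 1) *
        ((2 : ℝ) ^ ((l + 1) * logb 2 ((Fintype.card ι + N) / (2 * N))) - 1)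
      ≤ N / (2 * q - 1) * ((2 * q) ^ m - 1) := by
        have := two_rpow_mul_logb_le_pow (by linarith : 0 ≤ l + 1) (by positivity) hx
        rw [htwo_q] at this ⊢
        exact mul_le_mul_of_nonneg_left (by linarith) (div_nonneg hNpos.le (by linarith))
    _ = N * ∑ j ∈ range m, (2 * q) ^ j := by
        rw [geom_sum_eq (by linarith)]
        ring
    _ ≤ ∑ i, q ^ len i :=
        mul_geom_sum_le_sum_pow_of_card_fiber_le hq N len
          (fun j => by exact_mod_cast hcount j) m hm
    _ = ∑ i, (2 : ℝ) ^ (l * len i) := by simp only [q, rpow_mul zero_le_two, rpow_natCast]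

end

theorem side_info_packing_lower_bound_general
    (l : ℝ) (hl : 0 < l) (s : ℕ) (hs : 1 ≤ s) (K : ℕ)
    (c : Fin K → ℕ)
    (len : ∀ k : Fin K, Fin (c k) → ℕ)
    (hcount : ∀ (k : Fin K) (j : ℕ),
      ((Finset.univ.filter (fun i => len k i = j)).card) ≤ s ^ 2 * 2 ^ j) :
    ∑ k, ∑ i, (2 : ℝ) ^ (l * (len k i : ℝ)) ≥
      ((s : ℝ) ^ 2 / ((2 : ℝ) ^ (l + 1) - 1)) *
        ∑ k, ((2 : ℝ) ^ ((l + 1) * Real.logb 2 (((c k : ℝ) + (s : ℝ) ^ 2) / (2 * (s : ℝ) ^ 2))) - 1) := by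
  rw [ge_iff_le, mul_sum]
  refine sum_le_sum fun k _ => ?_
  simpa using packing_lower_bound_s11 hl.le (pow_pos hs 2) (len k) (hcount k)

theorem side_info_packing_lower_bound
    (l : ℝ) (hl : 0 < l) (s : ℕ) (hs : 1 ≤ s) (K : ℕ) (hK : 1 ≤ K)
    (c : Fin K → ℕ) (hc : ∀ k, s ^ 2 ≤ c k)
    (len : ∀ k : Fin K, Fin (c k) → ℕ)
    (hcount : ∀ (k : Fin K) (j : ℕ),
      ((Finset.univ.filter (fun i => len k i = j)).card) ≤ s ^ 2 * 2 ^ j) :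
    ∑ k, ∑ i, (2 : ℝ) ^ (l * (len k i : ℝ)) ≥
      ((s : ℝ) ^ 2 / ((2 : ℝ) ^ (l + 1) - 1)) *
        ∑ k, ((2 : ℝ) ^ ((l + 1) * Real.logb 2 (((c k : ℝ) + (s : ℝ) ^ 2) / (2 * (s : ℝ) ^ 2))) - 1) :=
  side_info_packing_lower_bound_general l hl s hs K c len hcount
end

section
/- Let λ > 0 and c ≥ 1 an integer. Then (λ+1)·log₂ c − λ·γ ≤ log₂(∑ over any family of c values 2^{λ ℓ(i)}) whenever ℓ : Fin c → ℝ satisfies ∑_i 2^{-ℓ(i)} ≤ 2^{γ} with γ ≥ 0; equivalently, ∑_{i=1}^{c} 2^{λ ℓ(i)} ≥ 2^{(λ+1)log₂ c − λγ}. -/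
open Finset Real

theorem alternative_lower_bound
    (l : ℝ) (hl : 0 < l) (c : ℕ) (hc : 1 ≤ c)
    (γ : ℝ) (hγ : 0 ≤ γ)
    (len : Fin c → ℝ)
    (hKraft : ∑ i, (2 : ℝ) ^ (-(len i)) ≤ 2 ^ γ) :
    ∑ i, (2 : ℝ) ^ (l * len i) ≥ (2 : ℝ) ^ ((l + 1) * Real.logb 2 (c : ℝ) - l * γ) := by
  set S := ∑ i, (2 : ℝ) ^ (l * len i) with hS
  have hS0 : 0 ≤ S := Finset.sum_nonneg fun i _ => by positivity
  have hl1 : (1:ℝ) ≤ l + 1 := by linarith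
  have hl1p : (0:ℝ) < l + 1 := by linarith
  have hexp : 0 ≤ 1 - (l+1)⁻¹ := by
    have : (l+1)⁻¹ ≤ 1 := by
      rw [inv_le_one_iff₀]; right; linarith
    linarith
  have h1 := inner_le_weight_mul_Lp_of_nonneg (Finset.univ : Finset (Fin c)) hl1
      (fun i => (2:ℝ) ^ (-len i)) (fun i => (2:ℝ) ^ (len i))
      (fun i => by positivity) (fun i => by positivity)
  have e1 : ∀ i : Fin c, (2:ℝ)^(-len i) * 2^(len i) = 1 := fun i => by
    rw [← Real.rpow_add two_pos]; simp
  have e2 : ∀ i : Fin c, (2:ℝ)^(-len i) * ((2:ℝ)^(len i))^(l+1) = 2^(l * len i) := fun i => by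
    rw [← Real.rpow_mul (by norm_num : (0:ℝ) ≤ 2), ← Real.rpow_add two_pos]
    congr 1; ring
  simp only [e1, e2, Finset.sum_const, Finset.card_univ, Fintype.card_fin, nsmul_eq_mul,
    mul_one] at h1
  have h2 : (c:ℝ) ≤ ((2:ℝ)^γ)^(1-(l+1)⁻¹) * S^((l+1)⁻¹) := by
    refine h1.trans ?_
    gcongr
  have hc0 : (0:ℝ) < c := by exact_mod_cast hc
  have h3 : (c:ℝ)^(l+1) ≤ (2:ℝ)^(l*γ) * S := by
    have hstep := Real.rpow_le_rpow hc0.le h2 hl1p.le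
    have heq : (((2:ℝ)^γ)^(1-(l+1)⁻¹) * S^((l+1)⁻¹))^(l+1) = (2:ℝ)^(l*γ) * S := by
      rw [Real.mul_rpow (by positivity) (Real.rpow_nonneg hS0 _),
        ← Real.rpow_mul (by positivity : (0:ℝ) ≤ (2:ℝ)^γ),
        ← Real.rpow_mul hS0,
        ← Real.rpow_mul (by norm_num : (0:ℝ) ≤ 2)]
      have ha : γ * ((1-(l+1)⁻¹)*(l+1)) = l*γ := by field_simp; ring
      have hb : (l+1)⁻¹*(l+1) = 1 := inv_mul_cancel₀ hl1p.ne'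
      rw [ha, hb, Real.rpow_one]
    rwa [heq] at hstep
  rw [ge_iff_le, Real.rpow_sub two_pos, div_le_iff₀ (by positivity)]
  have hcl : (2:ℝ)^((l+1) * Real.logb 2 (c:ℝ)) = (c:ℝ)^(l+1) := by
    rw [mul_comm, Real.rpow_mul (by norm_num : (0:ℝ) ≤ 2),
      Real.rpow_logb two_pos (by norm_num) hc0]
  rw [hcl, mul_comm]
  exact h3
end
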